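/- For every function f : {1, …, K} → ℂ and every x ∈ {1, …, K}, as n → ∞: E_x[f(Y_n) 1_{τ > n}] = Σ_{k=0}^{T−1} conj(λ_k)^n · conj(w_k(x)) · ⟨v_k, f⟩ + o(ρ^n), where f is viewed as a vector of ℂ^K and ⟨·,·⟩ is the Hermitian inner product. -/

import Mathlib

open Filter Asymptotics

/-- `n`-step sub-transition probabilities: `mpow Q n x y = P_x(Y_n = y, τ > n)`. -/
noncomputable def mpow {K : ℕ} (Q : Fin K → Fin K → ℝ) : ℕ → Fin K → Fin K → ℝ
  | 0 => fun x y => if x = y then 1 else 0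
  | n + 1 => fun x y => ∑ z, mpow Q n x z * Q z y

/-- The left eigenvector `v_l` : `v_l(y) = exp(-2iπ·j(y)·l/T)·ν(y)` where `j(y)` is the index
of the cyclic class of `y`. -/
noncomputable def vkC {K T : ℕ} (j : Fin K → ZMod T) (ν : Fin K → ℝ) (l : ℕ) (y : Fin K) : ℂ :=
  Complex.exp (-(2 * (Real.pi : ℂ) * Complex.I * ((j y).val : ℂ) * (l : ℂ)) / (T : ℂ)) * (ν y : ℂ)

/-- The right eigenvector `w_l` : `w_l(y) = exp(2iπ·j(y)·l/T)·ξ(y)`. -/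
noncomputable def wkC {K T : ℕ} (j : Fin K → ZMod T) (ξ : Fin K → ℝ) (l : ℕ) (y : Fin K) : ℂ :=
  Complex.exp ((2 * (Real.pi : ℂ) * Complex.I * ((j y).val : ℂ) * (l : ℂ)) / (T : ℂ)) * (ξ y : ℂ)

/-!
Doob's transform `A(u, v) = Q(u, v) ξ(v) / (ρ ξ(u))` is a stochastic matrix with stationary law
`ν ξ`, and `Qⁿ(x, y) = ρⁿ ξ(x) Aⁿ(x, y) / ξ(y)`. As `A` raises the cyclic class index by one at
each step, `A^T` maps every class into itself; irreducibility and the gcd condition on return times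
make some power of `A^T` have its column `y` bounded below on the class of `y`. This Doeblin
condition contracts the oscillation of that column over the class geometrically, so
`Aⁿ(x, y) - T ν(y) ξ(y) 1[n ≡ j(y) - j(x)] → 0`; the limit is identified by stationarity, each
class carrying stationary mass `1 / T`. On the spectral side, orthogonality of the characters of
`ZMod T` collapses the sum over `k` into exactly `ρⁿ ξ(x) ν(y) T 1[n ≡ j(y) - j(x)]`.
-/

open Finset Matrix Topology

lemma tendsto_zero_of_antitone_of_le_mul {g : ℕ → ℝ} (hg0 : ∀ m, 0 ≤ g m) (hg : Antitone g)
    {k : ℕ} (hk : 0 < k) {r : ℝ} (hr0 : 0 ≤ r) (hr1 : r < 1) (hstep : ∀ m, g (m + k) ≤ r * g m) :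
    Tendsto g atTop (𝓝 0) := by
  have hiter : ∀ q, g (k * q) ≤ r ^ q * g 0 := by
    intro q
    induction q with
    | zero => simp
    | succ q ih =>
      calc g (k * (q + 1)) = g (k * q + k) := by rw [mul_add_one]
        _ ≤ r * g (k * q) := hstep _
        _ ≤ r * (r ^ q * g 0) := mul_le_mul_of_nonneg_left ih hr0
        _ = r ^ (q + 1) * g 0 := by ring
  refine squeeze_zero hg0 (fun m => (hg (Nat.mul_div_le m k)).trans (hiter (m / k))) ?_
  simpa using ((tendsto_pow_atTop_nhds_zero_of_lt_one hr0 hr1).comp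
    (Nat.tendsto_div_const_atTop hk.ne')).mul_const (g 0)

section StdSimplex

variable {ι : Type*} [Fintype ι] {p : ι → ℝ} {s : Finset ι}

lemma sum_mul_le_of_le_apply {h : ι → ℝ} (hp : p ∈ stdSimplex ℝ ι) (hps : ∀ z ∉ s, p z = 0)
    {y : ι} (hy : y ∈ s) {δ c : ℝ} (hδ : δ ≤ p y) (hc : ∀ z ∈ s, h z ≤ c) :
    ∑ z, p z * h z ≤ δ * h y + (1 - δ) * c := by
  classical
  have hterm : ∀ z, p z * h z ≤ p z * c := fun z => by
    by_cases hz : z ∈ s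
    · exact mul_le_mul_of_nonneg_left (hc z hz) (hp.1 z)
    · simp [hps z hz]
  have hrest : ∑ z ∈ {y}ᶜ, p z = 1 - p y := by
    rw [← hp.2, Fintype.sum_eq_add_sum_compl y p]
    ring
  have hy' : (p y - δ) * h y ≤ (p y - δ) * c := mul_le_mul_of_nonneg_left (hc y hy) (by linarith)
  calc ∑ z, p z * h z = p y * h y + ∑ z ∈ {y}ᶜ, p z * h z := Fintype.sum_eq_add_sum_compl y _
    _ ≤ p y * h y + ∑ z ∈ {y}ᶜ, p z * c := by grw [sum_le_sum fun z _ => hterm z]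
    _ ≤ δ * h y + (1 - δ) * c := by rw [← sum_mul, hrest]; linarith

lemma le_sum_mul_of_le_apply {h : ι → ℝ} (hp : p ∈ stdSimplex ℝ ι) (hps : ∀ z ∉ s, p z = 0)
    {y : ι} (hy : y ∈ s) {δ c : ℝ} (hδ : δ ≤ p y) (hc : ∀ z ∈ s, c ≤ h z) :
    δ * h y + (1 - δ) * c ≤ ∑ z, p z * h z := by
  have := sum_mul_le_of_le_apply (h := -h) (c := -c) hp hps hy hδ fun z hz => neg_le_neg (hc z hz)
  simp only [Pi.neg_apply, mul_neg, sum_neg_distrib] at this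
  linarith

lemma sum_mul_mem_Icc (hp : p ∈ stdSimplex ℝ ι) (hps : ∀ z ∉ s, p z = 0) (hs : s.Nonempty)
    (h : ι → ℝ) : ∑ z, p z * h z ∈ Set.Icc (s.inf' hs h) (s.sup' hs h) := by
  obtain ⟨y, hy⟩ := hs
  constructor
  · simpa using le_sum_mul_of_le_apply hp hps hy (hp.1 y) fun z hz => inf'_le h hz
  · simpa using sum_mul_le_of_le_apply hp hps hy (hp.1 y) fun z hz => le_sup' h hz

end StdSimplex

section CyclicClass

variable {ι : Type*} [Fintype ι] {T : ℕ}

def cyclicClass (j : ι → ZMod T) (y : ι) : Finset ι := {u | j u = j y}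

variable {j : ι → ZMod T} {u y : ι}

lemma mem_cyclicClass : u ∈ cyclicClass j y ↔ j u = j y := by simp [cyclicClass]

lemma self_mem_cyclicClass : y ∈ cyclicClass j y := mem_cyclicClass.2 rfl

lemma cyclicClass_nonempty : (cyclicClass j y).Nonempty := ⟨y, self_mem_cyclicClass⟩

end CyclicClass

namespace Matrix

variable {ι : Type*} [Fintype ι]

lemma mul_apply_pos {M N : Matrix ι ι ℝ} (hM : ∀ u v, 0 ≤ M u v) (hN : ∀ u v, 0 ≤ N u v)
    {u v w : ι} (huv : 0 < M u v) (hvw : 0 < N v w) : 0 < (M * N) u w :=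
  (mul_pos huv hvw).trans_le <| single_le_sum (f := fun z => M u z * N z w)
    (fun z _ => mul_nonneg (hM u z) (hN z w)) (mem_univ v)

section Doob

variable {Q : Matrix ι ι ℝ} {ρ : ℝ} {ξ : ι → ℝ}

noncomputable def doobTransform (Q : Matrix ι ι ℝ) (ρ : ℝ) (ξ : ι → ℝ) : Matrix ι ι ℝ :=
  of fun u v => Q u v * ξ v / (ρ * ξ u)

lemma vecMul_doobTransform (hρ : ρ ≠ 0) (hξ : ∀ u, ξ u ≠ 0) {ν : ι → ℝ} (hνQ : ν ᵥ* Q = ρ • ν) :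
    (ν * ξ) ᵥ* doobTransform Q ρ ξ = ν * ξ := by
  ext v
  have hν := congrFun hνQ v
  simp only [vecMul, dotProduct, Pi.smul_apply, smul_eq_mul] at hν
  have hterm : ∀ u, ν u * ξ u * doobTransform Q ρ ξ u v = ν u * Q u v * (ξ v / ρ) := fun u => by
    simp only [doobTransform, of_apply]
    field_simp [hξ u]
  simp only [vecMul, dotProduct, Pi.mul_apply]
  simp_rw [hterm, ← sum_mul, hν]
  field_simp

variable [DecidableEq ι]

lemma doobTransform_pow_apply (hρ : ρ ≠ 0) (hξ : ∀ u, ξ u ≠ 0) (n : ℕ) (u v : ι) :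
    (doobTransform Q ρ ξ ^ n) u v = (Q ^ n) u v * ξ v / (ρ ^ n * ξ u) := by
  induction n generalizing v with
  | zero => by_cases h : u = v <;> simp [h, hξ]
  | succ n ih =>
    rw [pow_succ, pow_succ, mul_apply, mul_apply, sum_mul, sum_div]
    refine sum_congr rfl fun z _ => ?_
    rw [ih, doobTransform, of_apply]
    field_simp [hξ z]
    ring

lemma doobTransform_pow_apply_pos_iff (hρ : 0 < ρ) (hξ : ∀ u, 0 < ξ u) (n : ℕ) (u v : ι) :
    0 < (doobTransform Q ρ ξ ^ n) u v ↔ 0 < (Q ^ n) u v := by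
  rw [doobTransform_pow_apply hρ.ne' (fun u => (hξ u).ne'), mul_div_assoc,
    mul_pos_iff_of_pos_right (div_pos (hξ v) (mul_pos (pow_pos hρ n) (hξ u)))]

lemma doobTransform_mem_rowStochastic (hQ : ∀ u v, 0 ≤ Q u v) (hρ : 0 < ρ) (hξ : ∀ u, 0 < ξ u)
    (hQξ : Q *ᵥ ξ = ρ • ξ) : doobTransform Q ρ ξ ∈ rowStochastic ℝ ι := by
  refine mem_rowStochastic_iff_sum.2 ⟨fun u v => ?_, fun u => ?_⟩
  · exact div_nonneg (mul_nonneg (hQ u v) (hξ v).le) (mul_pos hρ (hξ u)).le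
  · have hQξu := congrFun hQξ u
    simp only [mulVec, dotProduct, Pi.smul_apply, smul_eq_mul] at hQξu
    simp only [doobTransform, of_apply, ← sum_div, hQξu]
    exact div_self (mul_pos hρ (hξ u)).ne'

end Doob

variable [DecidableEq ι]

lemma row_mem_stdSimplex {M : Matrix ι ι ℝ} (hM : M ∈ rowStochastic ℝ ι) (u : ι) :
    M u ∈ stdSimplex ℝ ι :=
  ⟨fun _ => nonneg_of_mem_rowStochastic hM, sum_row_of_mem_rowStochastic hM u⟩

lemma vecMul_pow_eq_self {R : Type*} [Semiring R] {M : Matrix ι ι R} {v : ι → R}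
    (hv : v ᵥ* M = v) (n : ℕ) : v ᵥ* M ^ n = v := by
  induction n with
  | zero => simp
  | succ n ih => rw [pow_succ, ← vecMul_vecMul, ih, hv]

lemma pow_apply_eq_zero_of_closed {R : Type*} [Semiring R] {M : Matrix ι ι R} {s : Finset ι}
    (hM : ∀ u ∈ s, ∀ z ∉ s, M u z = 0) (n : ℕ) : ∀ u ∈ s, ∀ z ∉ s, (M ^ n) u z = 0 := by
  induction n with
  | zero => exact fun u hu z hz => one_apply_ne (ne_of_mem_of_not_mem hu hz)
  | succ n ih =>
    intro u hu z hz
    rw [pow_succ, mul_apply]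
    refine sum_eq_zero fun w _ => ?_
    by_cases hw : w ∈ s
    · rw [hM w hw z hz, mul_zero]
    · rw [ih u hu w hw, zero_mul]

section Doeblin

variable {M : Matrix ι ι ℝ} {s : Finset ι} {y : ι}

lemma sup'_sub_inf'_mulVec_le (hM : M ∈ rowStochastic ℝ ι) (hclosed : ∀ u ∈ s, ∀ z ∉ s, M u z = 0)
    (hy : y ∈ s) {δ : ℝ} (hδ : ∀ u ∈ s, δ ≤ M u y) (h : ι → ℝ) :
    s.sup' ⟨y, hy⟩ (M *ᵥ h) - s.inf' ⟨y, hy⟩ (M *ᵥ h) ≤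
      (1 - δ) * (s.sup' ⟨y, hy⟩ h - s.inf' ⟨y, hy⟩ h) := by
  have hup : s.sup' ⟨y, hy⟩ (M *ᵥ h) ≤ δ * h y + (1 - δ) * s.sup' ⟨y, hy⟩ h :=
    sup'_le _ _ fun u hu => sum_mul_le_of_le_apply (row_mem_stdSimplex hM u) (hclosed u hu) hy
      (hδ u hu) fun z hz => le_sup' h hz
  have hlo : δ * h y + (1 - δ) * s.inf' ⟨y, hy⟩ h ≤ s.inf' ⟨y, hy⟩ (M *ᵥ h) :=
    le_inf' _ _ fun u hu => le_sum_mul_of_le_apply (row_mem_stdSimplex hM u) (hclosed u hu) hy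
      (hδ u hu) fun z hz => inf'_le h hz
  linarith

theorem tendsto_sup'_sub_inf'_pow_mulVec (hM : M ∈ rowStochastic ℝ ι)
    (hclosed : ∀ u ∈ s, ∀ z ∉ s, M u z = 0) (hy : y ∈ s) {k : ℕ} (hk : 0 < k) {δ : ℝ}
    (hδ : 0 < δ) (hδk : ∀ u ∈ s, δ ≤ (M ^ k) u y) (h : ι → ℝ) :
    Tendsto (fun m => s.sup' ⟨y, hy⟩ (M ^ m *ᵥ h) - s.inf' ⟨y, hy⟩ (M ^ m *ᵥ h)) atTop (𝓝 0) := by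
  have hstep : ∀ m n δ', (∀ u ∈ s, δ' ≤ (M ^ n) u y) →
      s.sup' ⟨y, hy⟩ (M ^ (m + n) *ᵥ h) - s.inf' ⟨y, hy⟩ (M ^ (m + n) *ᵥ h) ≤
        (1 - δ') * (s.sup' ⟨y, hy⟩ (M ^ m *ᵥ h) - s.inf' ⟨y, hy⟩ (M ^ m *ᵥ h)) := by
    intro m n δ' hδ'
    rw [add_comm, pow_add, ← mulVec_mulVec]
    exact sup'_sub_inf'_mulVec_le (pow_mem hM n) (pow_apply_eq_zero_of_closed hclosed n) hy hδ' _
  have hanti : Antitone fun m => s.sup' ⟨y, hy⟩ (M ^ m *ᵥ h) - s.inf' ⟨y, hy⟩ (M ^ m *ᵥ h) :=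
    antitone_nat_of_succ_le fun m => by
      simpa using hstep m 1 0 fun u _ => by simpa using nonneg_of_mem_rowStochastic hM
  have hδ1 : δ ≤ 1 := (hδk y hy).trans (le_one_of_mem_rowStochastic (pow_mem hM k))
  exact tendsto_zero_of_antitone_of_le_mul
    (fun m => sub_nonneg.2 ((inf'_le _ hy).trans (le_sup' _ hy))) hanti hk (by linarith)
    (by linarith) fun m => hstep m k δ hδk

end Doeblin

section Periodic

variable {T : ℕ} {A : Matrix ι ι ℝ} {j : ι → ZMod T}

lemma pow_apply_eq_zero_of_ne (hA : ∀ u v, 0 ≤ A u v) (hj : ∀ u v, 0 < A u v → j v = j u + 1)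
    {n : ℕ} {x y : ι} (hxy : j y ≠ j x + n) : (A ^ n) x y = 0 := by
  induction n generalizing y with
  | zero => exact one_apply_ne fun h => hxy (by simp [h])
  | succ n ih =>
    rw [pow_succ, mul_apply]
    refine sum_eq_zero fun z _ => ?_
    by_cases hz : j z = j x + n
    · obtain h | h := (hA z y).eq_or_lt
      · rw [← h, mul_zero]
      · exact (hxy (by rw [hj z y h, hz]; push_cast; ring)).elim
    · rw [ih hz, zero_mul]

lemma eventually_pow_mul_apply_self_pos (hA : ∀ u v, 0 ≤ A u v) (hT : 0 < T) {y : ι}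
    (hdvd : ∀ n, 0 < n → 0 < (A ^ n) y y → T ∣ n)
    (hgcd : ∀ d, (∀ n, 0 < n → 0 < (A ^ n) y y → d ∣ n) → d ∣ T) :
    ∀ᶠ m in atTop, 0 < (A ^ (m * T)) y y := by
  let S : AddSubmonoid ℕ :=
    { carrier := {m | 0 < (A ^ (m * T)) y y}
      zero_mem' := by simp
      add_mem' := fun {a b} ha hb => by
        rw [Set.mem_ofPred_eq, add_mul, pow_add]
        exact mul_apply_pos (pow_apply_nonneg hA _) (pow_apply_nonneg hA _) ha hb }
  have hS : Nat.setGcd S = 1 := by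
    refine Nat.dvd_one.mp (Nat.dvd_of_mul_dvd_mul_right hT ?_)
    rw [one_mul]
    refine hgcd _ fun n hn hpos => ?_
    obtain ⟨m, rfl⟩ := hdvd n hn hpos
    rw [mul_comm T]
    exact mul_dvd_mul_right (Nat.setGcd_dvd_of_mem (s := S) (by rwa [mul_comm] at hpos)) T
  obtain ⟨N, hN⟩ := Nat.exists_mem_closure_of_ge (S : Set ℕ)
  rw [AddSubmonoid.closure_eq, hS] at hN
  exact eventually_atTop.2 ⟨N, fun m hm => hN m hm (one_dvd m)⟩

lemma eventually_forall_pow_mul_apply_pos (hA : ∀ u v, 0 ≤ A u v)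
    (hj : ∀ u v, 0 < A u v → j v = j u + 1) {y : ι} (hirr : ∀ u, ∃ n, 0 < (A ^ n) u y)
    (hret : ∀ᶠ m in atTop, 0 < (A ^ (m * T)) y y) :
    ∀ᶠ m in atTop, ∀ u, j u = j y → 0 < (A ^ (m * T)) u y := by
  refine eventually_all.2 fun u => ?_
  by_cases hu : j u = j y
  · obtain ⟨n, hn⟩ := hirr u
    obtain ⟨b, rfl⟩ : T ∣ n := by
      have := not_imp_comm.1 (pow_apply_eq_zero_of_ne hA hj) hn.ne'
      rwa [hu, left_eq_add, ZMod.natCast_eq_zero_iff] at this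
    filter_upwards [eventually_ge_atTop b, (tendsto_sub_atTop_nat b).eventually hret]
      with m hm hm' _
    rw [← Nat.add_sub_cancel' hm, add_mul, pow_add, mul_comm b]
    exact mul_apply_pos (pow_apply_nonneg hA _) (pow_apply_nonneg hA _) hn hm'
  · exact Eventually.of_forall fun _ h => (hu h).elim

theorem tendsto_sup'_sub_inf'_pow_mul_apply (hA : A ∈ rowStochastic ℝ ι) (hT : 0 < T)
    (hj : ∀ u v, 0 < A u v → j v = j u + 1) {y : ι} (hirr : ∀ u, ∃ n, 0 < (A ^ n) u y)
    (hdvd : ∀ n, 0 < n → 0 < (A ^ n) y y → T ∣ n)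
    (hgcd : ∀ d, (∀ n, 0 < n → 0 < (A ^ n) y y → d ∣ n) → d ∣ T) :
    Tendsto (fun m => (cyclicClass j y).sup' cyclicClass_nonempty (fun z => (A ^ (m * T)) z y) -
      (cyclicClass j y).inf' cyclicClass_nonempty (fun z => (A ^ (m * T)) z y)) atTop (𝓝 0) := by
  have hA0 : ∀ u v, 0 ≤ A u v := fun u v => nonneg_of_mem_rowStochastic hA
  set C := cyclicClass j y
  obtain ⟨N, hN⟩ := eventually_atTop.1 (eventually_forall_pow_mul_apply_pos hA0 hj hirr
    (eventually_pow_mul_apply_self_pos hA0 hT hdvd hgcd))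
  have hpos : ∀ u ∈ C, 0 < ((A ^ T) ^ (N + 1)) u y := fun u hu => by
    rw [← pow_mul, mul_comm]
    exact hN (N + 1) N.le_succ u (mem_cyclicClass.1 hu)
  have hclosed : ∀ u ∈ C, ∀ z ∉ C, (A ^ T) u z = 0 := fun u hu z hz =>
    pow_apply_eq_zero_of_ne hA0 hj (by simp_all [C, mem_cyclicClass])
  have := tendsto_sup'_sub_inf'_pow_mulVec (pow_mem hA T) hclosed self_mem_cyclicClass
    N.succ_pos ((lt_inf'_iff cyclicClass_nonempty).2 hpos) (fun u hu => inf'_le _ hu)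
    (Pi.single y 1)
  simp only [mulVec_single_one, ← pow_mul, mul_comm T] at this
  exact this

lemma pow_apply_mem_Icc (hA : A ∈ rowStochastic ℝ ι) (hj : ∀ u v, 0 < A u v → j v = j u + 1)
    {n : ℕ} {x y : ι} (hn : (n : ZMod T) = j y - j x) :
    (A ^ n) x y ∈
      Set.Icc ((cyclicClass j y).inf' cyclicClass_nonempty fun z => (A ^ (n / T * T)) z y)
        ((cyclicClass j y).sup' cyclicClass_nonempty fun z => (A ^ (n / T * T)) z y) := by
  rw [show (A ^ n) x y = ∑ z, (A ^ (n % T)) x z * (A ^ (n / T * T)) z y by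
    rw [← mul_apply, ← pow_add, Nat.mod_add_div']]
  refine sum_mul_mem_Icc (row_mem_stdSimplex (pow_mem hA _) x) (fun z hz => ?_) _ _
  refine pow_apply_eq_zero_of_ne (fun u v => nonneg_of_mem_rowStochastic hA) hj fun h => ?_
  rw [ZMod.natCast_mod, hn, add_sub_cancel] at h
  exact hz (mem_cyclicClass.2 h)

lemma sum_filter_add_one_apply (hA : A ∈ rowStochastic ℝ ι)
    (hj : ∀ u v, 0 < A u v → j v = j u + 1) (c : ZMod T) (z : ι) :
    ∑ v with j v = c + 1, A z v = if j z = c then 1 else 0 := by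
  split_ifs with hz
  · rw [sum_filter_of_ne fun v _ hv => ?_, sum_row_of_mem_rowStochastic hA]
    rw [hj z v ((nonneg_of_mem_rowStochastic hA).lt_of_ne' hv), hz]
  · refine sum_eq_zero fun v hv => ?_
    obtain h | h := (nonneg_of_mem_rowStochastic hA (i := z) (j := v)).eq_or_lt
    · exact h.symm
    · exact (hz (add_right_cancel ((hj z v h).symm.trans (mem_filter.1 hv).2))).elim

lemma sum_filter_eq_inv_of_vecMul_eq [NeZero T] (hA : A ∈ rowStochastic ℝ ι)
    (hj : ∀ u v, 0 < A u v → j v = j u + 1) {π : ι → ℝ} (hπ : π ᵥ* A = π)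
    (hπ1 : ∑ u, π u = 1) (c : ZMod T) : ∑ u with j u = c, π u = (T : ℝ)⁻¹ := by
  have hstep : ∀ c : ZMod T, ∑ u with j u = c + 1, π u = ∑ u with j u = c, π u := fun c => by
    conv_lhs => rw [← hπ]
    simp only [vecMul, dotProduct]
    rw [sum_comm]
    simp_rw [← mul_sum, sum_filter_add_one_apply hA hj, mul_ite, mul_one, mul_zero, sum_ite,
      sum_const_zero, add_zero]
  have hconst : ∀ c : ZMod T, ∑ u with j u = c, π u = ∑ u with j u = 0, π u := by
    have hnat : ∀ n : ℕ, ∑ u with j u = n, π u = ∑ u with j u = 0, π u := fun n => by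
      induction n with
      | zero => simp
      | succ n ih => rw [Nat.cast_succ, hstep, ih]
    exact fun c => by rw [← ZMod.natCast_zmod_val c, hnat]
  have hsum : ∑ c : ZMod T, ∑ u with j u = c, π u = 1 := by rw [sum_fiberwise, hπ1]
  rw [sum_congr rfl fun c _ => hconst c, sum_const, card_univ, ZMod.card, nsmul_eq_mul] at hsum
  rw [hconst c]
  exact eq_inv_of_mul_eq_one_right hsum

lemma natCast_mul_mem_Icc_of_vecMul_eq [NeZero T] (hA : A ∈ rowStochastic ℝ ι)
    (hj : ∀ u v, 0 < A u v → j v = j u + 1) {π : ι → ℝ} (hπ0 : ∀ u, 0 ≤ π u)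
    (hπ : π ᵥ* A = π) (hπ1 : ∑ u, π u = 1) (y : ι) (m : ℕ) :
    (T : ℝ) * π y ∈
      Set.Icc ((cyclicClass j y).inf' cyclicClass_nonempty fun z => (A ^ (m * T)) z y)
        ((cyclicClass j y).sup' cyclicClass_nonempty fun z => (A ^ (m * T)) z y) := by
  have hp : (fun z => if j z = j y then T * π z else 0) ∈ stdSimplex ℝ ι := by
    refine ⟨fun z => by dsimp only; split_ifs <;> positivity [hπ0 z], ?_⟩
    rw [← sum_filter, ← mul_sum, sum_filter_eq_inv_of_vecMul_eq hA hj hπ hπ1,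
      mul_inv_cancel₀ (NeZero.ne _)]
  have hsum : (T : ℝ) * π y = ∑ z, (if j z = j y then T * π z else 0) * (A ^ (m * T)) z y := by
    conv_lhs => rw [← vecMul_pow_eq_self hπ (m * T)]
    simp only [vecMul, dotProduct, mul_sum]
    refine sum_congr rfl fun z _ => ?_
    split_ifs with hz
    · ring
    · rw [pow_apply_eq_zero_of_ne (fun u v => nonneg_of_mem_rowStochastic hA) hj
        (by simpa [eq_comm] using hz)]
      simp
  rw [hsum]
  exact sum_mul_mem_Icc hp (fun z hz => if_neg (mt mem_cyclicClass.2 hz)) _ _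

theorem tendsto_pow_apply_sub_ite (hA : A ∈ rowStochastic ℝ ι) (hT : 0 < T)
    (hj : ∀ u v, 0 < A u v → j v = j u + 1) {π : ι → ℝ} (hπ0 : ∀ u, 0 ≤ π u)
    (hπ : π ᵥ* A = π) (hπ1 : ∑ u, π u = 1) (x y : ι) (hirr : ∀ u, ∃ n, 0 < (A ^ n) u y)
    (hdvd : ∀ n, 0 < n → 0 < (A ^ n) y y → T ∣ n)
    (hgcd : ∀ d, (∀ n, 0 < n → 0 < (A ^ n) y y → d ∣ n) → d ∣ T) :
    Tendsto (fun n : ℕ => (A ^ n) x y - if (n : ZMod T) = j y - j x then T * π y else 0)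
      atTop (𝓝 0) := by
  have : NeZero T := ⟨hT.ne'⟩
  refine squeeze_zero_norm (fun n => ?_) ((tendsto_sup'_sub_inf'_pow_mul_apply hA hT hj hirr
    hdvd hgcd).comp (Nat.tendsto_div_const_atTop hT.ne'))
  split_ifs with hn
  · obtain ⟨h1, h2⟩ := pow_apply_mem_Icc hA hj hn
    obtain ⟨h3, h4⟩ := natCast_mul_mem_Icc_of_vecMul_eq hA hj hπ0 hπ hπ1 y (n / T)
    exact abs_sub_le_of_le_of_le h1 h2 h3 h4
  · rw [pow_apply_eq_zero_of_ne (fun u v => nonneg_of_mem_rowStochastic hA) hj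
      fun h => hn (by rw [h]; ring), sub_zero, norm_zero]
    exact sub_nonneg.2 ((inf'_le _ self_mem_cyclicClass).trans
      (le_sup' (fun z => (A ^ (n / T * T)) z y) self_mem_cyclicClass))

end Periodic

end Matrix

lemma mpow_apply_eq_pow_apply {K : ℕ} (Q : Fin K → Fin K → ℝ) (n : ℕ) (x y : Fin K) :
    mpow Q n x y = (of Q ^ n) x y := by
  induction n generalizing y with
  | zero => simp [mpow, one_apply]
  | succ n ih => simp [mpow, pow_succ, mul_apply, ih]

section Spectral

open ZMod

variable {K T : ℕ} [NeZero T]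

lemma stdAddChar_natCast_mul (k : ℕ) (a : ZMod T) :
    stdAddChar ((k : ZMod T) * a) = Complex.exp (2 * Real.pi * Complex.I * a.val * k / T) := by
  have := stdAddChar_coe (N := T) ((a.val * k : ℕ) : ℤ)
  push_cast [natCast_zmod_val] at this
  rw [mul_comm, this, mul_assoc (2 * Real.pi * Complex.I : ℂ)]

lemma sum_range_stdAddChar_mul (b : ZMod T) :
    ∑ k ∈ range T, stdAddChar ((k : ZMod T) * b) = if b = 0 then (T : ℂ) else 0 := by
  have := AddChar.sum_mulShift b (isPrimitive_stdAddChar T)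
  rw [ZMod.card, Nat.cast_ite, Nat.cast_zero] at this
  rw [← this]
  refine sum_nbij' (fun k => (k : ZMod T)) ZMod.val (by simp) (by simp [ZMod.val_lt])
    (fun a ha => by simpa [ZMod.val_natCast] using Nat.mod_eq_of_lt (mem_range.1 ha))
    (by simp) (by simp)

lemma wkC_eq (j : Fin K → ZMod T) (ξ : Fin K → ℝ) (k : ℕ) (x : Fin K) :
    wkC j ξ k x = stdAddChar ((k : ZMod T) * j x) * ξ x := by
  rw [wkC, stdAddChar_natCast_mul]

lemma vkC_eq (j : Fin K → ZMod T) (ν : Fin K → ℝ) (k : ℕ) (y : Fin K) :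
    vkC j ν k y = stdAddChar (-((k : ZMod T) * j y)) * ν y := by
  rw [vkC, AddChar.map_neg_eq_inv, stdAddChar_natCast_mul, ← Complex.exp_neg, neg_div]

lemma exp_eq_stdAddChar (k : ℕ) :
    Complex.exp (2 * Real.pi * Complex.I * k / T) = stdAddChar (k : ZMod T) := by
  simpa using (stdAddChar_coe (N := T) k).symm

lemma sum_spectral_eq (j : Fin K → ZMod T) (ρ : ℝ) (ν ξ : Fin K → ℝ) (f : Fin K → ℂ) (x : Fin K)
    (n : ℕ) :
    ∑ k ∈ range T,
        (starRingEnd ℂ) ((ρ : ℂ) * Complex.exp (2 * Real.pi * Complex.I * k / T)) ^ n *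
          (starRingEnd ℂ) (wkC j ξ k x) * ∑ y, (starRingEnd ℂ) (vkC j ν k y) * f y =
      ∑ y, (ρ : ℂ) ^ n * ξ x * ν y * f y * if (n : ZMod T) = j y - j x then (T : ℂ) else 0 := by
  have hterm : ∀ (k : ℕ) y,
      (starRingEnd ℂ) ((ρ : ℂ) * Complex.exp (2 * Real.pi * Complex.I * k / T)) ^ n *
          (starRingEnd ℂ) (wkC j ξ k x) * ((starRingEnd ℂ) (vkC j ν k y) * f y) =
        (ρ : ℂ) ^ n * ξ x * ν y * f y * stdAddChar ((k : ZMod T) * (j y - j x - (n : ZMod T))) := by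
    intro k y
    -- each summand of the exponent is the character value of one conjugated factor
    rw [exp_eq_stdAddChar, wkC_eq, vkC_eq, show (k : ZMod T) * (j y - j x - (n : ZMod T)) =
      n • -(k : ZMod T) + (-((k : ZMod T) * j x) + -(-((k : ZMod T) * j y))) by
        rw [nsmul_eq_mul]; ring,
      AddChar.map_add_eq_mul, AddChar.map_add_eq_mul, AddChar.map_nsmul_eq_pow]
    simp only [map_mul, Complex.conj_ofReal, ← AddChar.map_neg_eq_conj, mul_pow]
    ring
  simp_rw [mul_sum, hterm]
  rw [sum_comm]
  refine sum_congr rfl fun y _ => ?_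
  simp_rw [← mul_sum, sum_range_stdAddChar_mul, sub_eq_zero, eq_comm]

end Spectral

lemma isLittleO_ofReal_pow_mul {ρ : ℝ} {c : ℕ → ℂ} (hc : Tendsto c atTop (𝓝 0)) :
    (fun n => (ρ : ℂ) ^ n * c n) =o[atTop] fun n => ρ ^ n := by
  have h : (fun n => (ρ : ℂ) ^ n) =O[atTop] fun n => ρ ^ n := isBigO_of_le _ fun n => by simp
  simpa using h.mul_isLittleO ((isLittleO_one_iff ℝ).2 hc)

theorem killed_expectation_spectral_expansion_general
    {K : ℕ} (Q : Fin K → Fin K → ℝ)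
    (hQnn : ∀ x y, 0 ≤ Q x y)
    (hirr : ∀ x y, ∃ n, 0 < mpow Q n x y)
    (T : ℕ) (hT : 0 < T)
    (hTdvd : ∀ (x : Fin K) (n : ℕ), 0 < n → 0 < mpow Q n x x → T ∣ n)
    (hTgcd : ∀ (x : Fin K) (d : ℕ), (∀ n : ℕ, 0 < n → 0 < mpow Q n x x → d ∣ n) → d ∣ T)
    (j : Fin K → ZMod T)
    (hjstep : ∀ x y, 0 < Q x y → j y = j x + 1)
    (ρ : ℝ) (hρ : 0 < ρ)
    (ν ξ : Fin K → ℝ) (hνpos : ∀ y, 0 < ν y) (hξpos : ∀ y, 0 < ξ y)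
    (hνeig : ∀ y, ∑ z, ν z * Q z y = ρ * ν y)
    (hξeig : ∀ y, ∑ z, Q y z * ξ z = ρ * ξ y)
    (hνξ : ∑ y, ν y * ξ y = 1)
    (f : Fin K → ℂ) (x : Fin K) :
    (fun n : ℕ =>
        (∑ y, (mpow Q n x y : ℂ) * f y)
          - ∑ k ∈ Finset.range T,
              ((starRingEnd ℂ) ((ρ : ℂ) * Complex.exp (2 * (Real.pi : ℂ) * Complex.I * (k : ℂ) / (T : ℂ)))) ^ n *
                (starRingEnd ℂ) (wkC j ξ k x) *
                ∑ y, (starRingEnd ℂ) (vkC j ν k y) * f y)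
      =o[Filter.atTop] (fun n : ℕ => ρ ^ n) := by
  have : NeZero T := ⟨hT.ne'⟩
  set A := doobTransform (of Q) ρ ξ
  have hA : A ∈ rowStochastic ℝ (Fin K) :=
    doobTransform_mem_rowStochastic hQnn hρ hξpos (funext hξeig)
  have hpos : ∀ n u v, 0 < (A ^ n) u v ↔ 0 < mpow Q n u v := fun n u v => by
    rw [mpow_apply_eq_pow_apply, doobTransform_pow_apply_pos_iff hρ hξpos]
  have hjA : ∀ u v, 0 < A u v → j v = j u + 1 := fun u v h =>
    hjstep u v (by simpa [mpow_apply_eq_pow_apply] using (hpos 1 u v).1 (by simpa using h))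
  have hconv : ∀ y, Tendsto (fun n : ℕ =>
      (A ^ n) x y - if (n : ZMod T) = j y - j x then T * (ν * ξ) y else 0) atTop (𝓝 0) := fun y =>
    tendsto_pow_apply_sub_ite hA hT hjA (fun u => (mul_pos (hνpos u) (hξpos u)).le)
      (vecMul_doobTransform hρ.ne' (fun u => (hξpos u).ne') (funext hνeig)) hνξ x y
      (fun u => (hirr u y).imp fun n => (hpos n u y).2)
      (fun n hn h => hTdvd y n hn ((hpos n y y).1 h))
      (fun d hd => hTgcd y d fun n hn h => hd n hn ((hpos n y y).2 h))
  refine (isLittleO_ofReal_pow_mul (c := fun n => ∑ y, (ξ x / ξ y * f y) *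
    (((A ^ n) x y - if (n : ZMod T) = j y - j x then T * (ν * ξ) y else 0 : ℝ) : ℂ)) ?_).congr_left
    fun n => ?_
  · simpa using tendsto_finsetSum univ fun y _ =>
      ((Complex.continuous_ofReal.tendsto 0).comp (hconv y)).const_mul (ξ x / ξ y * f y)
  · rw [sum_spectral_eq, ← sum_sub_distrib, mul_sum]
    refine sum_congr rfl fun y _ => ?_
    rw [mpow_apply_eq_pow_apply, doobTransform_pow_apply hρ.ne' fun u => (hξpos u).ne']
    have hρ' : (ρ : ℂ) ≠ 0 := Complex.ofReal_ne_zero.2 hρ.ne'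
    have hξ' : ∀ u, (ξ u : ℂ) ≠ 0 := fun u => Complex.ofReal_ne_zero.2 (hξpos u).ne'
    split_ifs
    · push_cast [Pi.mul_apply]
      field_simp [hξ' x, hξ' y]
    · push_cast
      field_simp [hξ' x, hξ' y]
      ring

/-- Spectral expansion of `E_x[f(Y_n) 1_{τ > n}]`: for every `f : {1, …, K} → ℂ` and state `x`,
`E_x[f(Y_n) 1_{τ > n}] = ∑_{k<T} conj(λ_k)^n · conj(w_k(x)) · ⟨v_k, f⟩ + o(ρ^n)`,
where `λ_k = ρ e^{2iπk/T}`. -/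
theorem killed_expectation_spectral_expansion
    {K : ℕ} (hK : 0 < K) (Q : Fin K → Fin K → ℝ)
    (hQnn : ∀ x y, 0 ≤ Q x y) (hQsub : ∀ x, ∑ y, Q x y ≤ 1)
    (habs : ∀ x, Filter.Tendsto (fun n => ∑ y, mpow Q n x y) Filter.atTop (nhds 0))
    (hirr : ∀ x y, ∃ n, 0 < mpow Q n x y)
    (T : ℕ) (hT : 0 < T)
    (hTdvd : ∀ (x : Fin K) (n : ℕ), 0 < n → 0 < mpow Q n x x → T ∣ n)
    (hTgcd : ∀ (x : Fin K) (d : ℕ), (∀ n : ℕ, 0 < n → 0 < mpow Q n x x → d ∣ n) → d ∣ T)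
    (j : Fin K → ZMod T) (hj1 : j ⟨0, hK⟩ = 0)
    (hjstep : ∀ x y, 0 < Q x y → j y = j x + 1)
    (ρ : ℝ) (hρ : 0 < ρ)
    (ν ξ : Fin K → ℝ) (hνpos : ∀ y, 0 < ν y) (hξpos : ∀ y, 0 < ξ y)
    (hνeig : ∀ y, ∑ z, ν z * Q z y = ρ * ν y)
    (hξeig : ∀ y, ∑ z, Q y z * ξ z = ρ * ξ y)
    (hνnorm : ∑ y, ν y = 1) (hνξ : ∑ y, ν y * ξ y = 1)
    (f : Fin K → ℂ) (x : Fin K) :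
    (fun n : ℕ =>
        (∑ y, (mpow Q n x y : ℂ) * f y)
          - ∑ k ∈ Finset.range T,
              ((starRingEnd ℂ) ((ρ : ℂ) * Complex.exp (2 * (Real.pi : ℂ) * Complex.I * (k : ℂ) / (T : ℂ)))) ^ n *
                (starRingEnd ℂ) (wkC j ξ k x) *
                ∑ y, (starRingEnd ℂ) (vkC j ν k y) * f y)
      =o[Filter.atTop] (fun n : ℕ => ρ ^ n) :=
  killed_expectation_spectral_expansion_general Q hQnn hirr T hT hTdvd hTgcd j hjstep ρ hρ ν ξ hνpos
    hξpos hνeig hξeig hνξ f x
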